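/- For the class C of binary decision trees of depth ℓ ≤ n on {−1,+1}^n (equivalently, all {−1,+1}-valued functions depending on at most ℓ coordinates), and empirical distributions Ĝ and R̂ on {−1,+1}^n, MPR(C, Ĝ, R̂) = max over subsets I ⊆ {1,…,n} with |I| = ℓ of 2·TV(Ĝ^I, R̂^I), where Ĝ^I and R̂^I denote marginal distributions over the coordinates in I. -/
import Mathlib


open Finset

/-- Marginal distribution of a probability mass function `G` on `{−1,+1}^n` (modelled as
`Fin n → Bool`) over the coordinates in `I`. -/
noncomputable def marg {n : ℕ} (G : (Fin n → Bool) → ℝ) (I : Finset (Fin n))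
    (y : {i : Fin n // i ∈ I} → Bool) : ℝ :=
  ∑ x : Fin n → Bool, if ∀ i : {i : Fin n // i ∈ I}, x i.1 = y i then G x else 0

namespace Stmt8Aux

variable {n : ℕ}

/-- Extend a partial assignment on `I` to a full point. -/
def extAssign (I : Finset (Fin n)) (y : {i : Fin n // i ∈ I} → Bool) : Fin n → Bool :=
  fun i => if h : i ∈ I then y ⟨i, h⟩ else false

lemma key (I : Finset (Fin n)) (c G : (Fin n → Bool) → ℝ)
    (hc : ∀ x y : Fin n → Bool, (∀ i ∈ I, x i = y i) → c x = c y) :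
    ∑ x, c x * G x = ∑ y : {i : Fin n // i ∈ I} → Bool, c (extAssign I y) * marg G I y := by
  have h1 : ∀ y : {i : Fin n // i ∈ I} → Bool, c (extAssign I y) * marg G I y
      = ∑ x : Fin n → Bool,
        if (∀ i : {i : Fin n // i ∈ I}, x i.1 = y i) then c (extAssign I y) * G x else 0 := by
    intro y
    rw [marg, Finset.mul_sum]
    refine Finset.sum_congr rfl fun x _ => ?_
    split <;> simp
  simp_rw [h1]
  rw [Finset.sum_comm]
  refine Finset.sum_congr rfl fun x _ => ?_
  rw [Finset.sum_eq_single (fun i : {i : Fin n // i ∈ I} => x i.1)]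
  · rw [if_pos (fun i => rfl)]
    have : c (extAssign I fun i : {i : Fin n // i ∈ I} => x i.1) = c x := by
      refine (hc x _ fun i hi => ?_).symm
      simp [extAssign, hi]
    rw [this]
  · intro y _ hy
    rw [if_neg]
    intro h
    exact hy (funext fun i => (h i).symm)
  · intro h; exact absurd (Finset.mem_univ _) h

lemma marg_sum (I : Finset (Fin n)) (G : (Fin n → Bool) → ℝ) :
    ∑ y : {i : Fin n // i ∈ I} → Bool, marg G I y = ∑ x, G x := by
  have := key I (fun _ => 1) G (fun _ _ _ => rfl)
  simpa using this.symm

end Stmt8Aux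

open Stmt8Aux in
/-- For the class `C` of depth-`ℓ` decision trees on `{−1,+1}^n` (i.e. all
`{−1,+1}`-valued functions depending on at most `ℓ` coordinates) and empirical
distributions `Ĝ, R̂` on `{−1,+1}^n`,
`MPR(C, Ĝ, R̂) = max_{|I| = ℓ} 2 · TV(Ĝ^I, R̂^I)` where `Ĝ^I, R̂^I` are marginals on `I`. -/
theorem stmt_8 (n ℓ : ℕ) (hℓ : ℓ ≤ n) (G R : (Fin n → Bool) → ℝ)
    (hG0 : ∀ x, 0 ≤ G x) (hG1 : ∑ x, G x = 1)
    (hR0 : ∀ x, 0 ≤ R x) (hR1 : ∑ x, R x = 1) :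
    (⨆ c : {c : (Fin n → Bool) → ℝ // (∀ x, c x = -1 ∨ c x = 1) ∧
        ∃ I : Finset (Fin n), I.card ≤ ℓ ∧
          ∀ x y : Fin n → Bool, (∀ i ∈ I, x i = y i) → c x = c y},
      |(∑ x, c.1 x * G x) - ∑ x, c.1 x * R x|)
    = ⨆ I : {I : Finset (Fin n) // I.card = ℓ},
        2 * ((1 / 2) * ∑ y : {i : Fin n // i ∈ I.1} → Bool,
          |marg G I.1 y - marg R I.1 y|) := by
  -- abbreviations
  set CT := {c : (Fin n → Bool) → ℝ // (∀ x, c x = -1 ∨ c x = 1) ∧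
      ∃ I : Finset (Fin n), I.card ≤ ℓ ∧
        ∀ x y : Fin n → Bool, (∀ i ∈ I, x i = y i) → c x = c y} with hCT
  -- nonempty index types
  have hne1 : Nonempty CT :=
    ⟨⟨fun _ => 1, fun _ => Or.inr rfl, ∅, Nat.zero_le _, fun _ _ _ => rfl⟩⟩
  obtain ⟨I₀, hI₀sub, hI₀card⟩ := Finset.exists_superset_card_eq
    (s := (∅ : Finset (Fin n))) (by simp) (by simpa using hℓ)
  have hne2 : Nonempty {I : Finset (Fin n) // I.card = ℓ} := ⟨⟨I₀, hI₀card⟩⟩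
  -- key bound: S I defined
  have hSle : ∀ I : Finset (Fin n),
      (∑ y : {i : Fin n // i ∈ I} → Bool, |marg G I y - marg R I y|) ≤ 2 := by
    intro I
    calc (∑ y : {i : Fin n // i ∈ I} → Bool, |marg G I y - marg R I y|)
        ≤ ∑ y : {i : Fin n // i ∈ I} → Bool, (marg G I y + marg R I y) := by
          refine Finset.sum_le_sum fun y _ => ?_
          have hGm : 0 ≤ marg G I y :=
            Finset.sum_nonneg fun x _ => by split <;> [exact hG0 x; rfl]
          have hRm : 0 ≤ marg R I y :=
            Finset.sum_nonneg fun x _ => by split <;> [exact hR0 x; rfl]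
          rw [abs_sub_le_iff]; constructor <;> linarith
      _ = 2 := by rw [Finset.sum_add_distrib, marg_sum, marg_sum, hG1, hR1]; norm_num
  have hbdd2 : BddAbove (Set.range fun I : {I : Finset (Fin n) // I.card = ℓ} =>
      2 * ((1 / 2) * ∑ y : {i : Fin n // i ∈ I.1} → Bool,
        |marg G I.1 y - marg R I.1 y|)) := by
    refine ⟨2, fun r hr => ?_⟩
    obtain ⟨I, rfl⟩ := hr
    have := hSle I.1
    linarith
  have hbdd1 : BddAbove (Set.range fun c : CT =>
      |(∑ x, c.1 x * G x) - ∑ x, c.1 x * R x|) := by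
    refine ⟨2, fun r hr => ?_⟩
    obtain ⟨c, rfl⟩ := hr
    have habs : ∀ x, |c.1 x| = 1 := fun x => by rcases c.2.1 x with h | h <;> simp [h]
    have h1 : |∑ x, c.1 x * G x| ≤ 1 := by
      calc |∑ x, c.1 x * G x| ≤ ∑ x, |c.1 x * G x| := Finset.abs_sum_le_sum_abs _ _
        _ = ∑ x, G x := Finset.sum_congr rfl fun x _ => by
            rw [abs_mul, habs, one_mul, abs_of_nonneg (hG0 x)]
        _ = 1 := hG1
    have h2 : |∑ x, c.1 x * R x| ≤ 1 := by
      calc |∑ x, c.1 x * R x| ≤ ∑ x, |c.1 x * R x| := Finset.abs_sum_le_sum_abs _ _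
        _ = ∑ x, R x := Finset.sum_congr rfl fun x _ => by
            rw [abs_mul, habs, one_mul, abs_of_nonneg (hR0 x)]
        _ = 1 := hR1
    calc |(∑ x, c.1 x * G x) - ∑ x, c.1 x * R x|
        ≤ |∑ x, c.1 x * G x| + |∑ x, c.1 x * R x| := abs_sub _ _
      _ ≤ 2 := by linarith
  apply le_antisymm
  · -- LHS ≤ RHS
    refine ciSup_le fun c => ?_
    obtain ⟨hc1, I, hIcard, hcdep⟩ := c.2
    obtain ⟨J, hIJ, hJcard⟩ := Finset.exists_superset_card_eq hIcard (by simpa using hℓ)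
    have hcdepJ : ∀ x y : Fin n → Bool, (∀ i ∈ J, x i = y i) → c.1 x = c.1 y :=
      fun x y h => hcdep x y fun i hi => h i (hIJ hi)
    have habs : ∀ x, |c.1 x| = 1 := fun x => by rcases hc1 x with h | h <;> simp [h]
    have hle : |(∑ x, c.1 x * G x) - ∑ x, c.1 x * R x|
        ≤ 2 * ((1 / 2) * ∑ y : {i : Fin n // i ∈ J} → Bool,
          |marg G J y - marg R J y|) := by
      rw [key J c.1 G hcdepJ, key J c.1 R hcdepJ, ← Finset.sum_sub_distrib]
      have : ∀ y : {i : Fin n // i ∈ J} → Bool,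
          c.1 (extAssign J y) * marg G J y - c.1 (extAssign J y) * marg R J y
            = c.1 (extAssign J y) * (marg G J y - marg R J y) := fun y => by ring
      simp_rw [this]
      calc |∑ y : {i : Fin n // i ∈ J} → Bool, c.1 (extAssign J y) * (marg G J y - marg R J y)|
          ≤ ∑ y : {i : Fin n // i ∈ J} → Bool,
              |c.1 (extAssign J y) * (marg G J y - marg R J y)| := Finset.abs_sum_le_sum_abs _ _
        _ = ∑ y : {i : Fin n // i ∈ J} → Bool, |marg G J y - marg R J y| := by
            refine Finset.sum_congr rfl fun y _ => ?_
            rw [abs_mul, habs, one_mul]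
        _ = 2 * ((1 / 2) * ∑ y : {i : Fin n // i ∈ J} → Bool,
              |marg G J y - marg R J y|) := by ring
    exact hle.trans (le_ciSup hbdd2 (⟨J, hJcard⟩ : {I : Finset (Fin n) // I.card = ℓ}))
  · -- RHS ≤ LHS
    refine ciSup_le fun I => ?_
    set c : (Fin n → Bool) → ℝ := fun x =>
      if 0 ≤ marg G I.1 (fun i : {i : Fin n // i ∈ I.1} => x i.1)
          - marg R I.1 (fun i : {i : Fin n // i ∈ I.1} => x i.1) then 1 else -1 with hc
    have hc1 : ∀ x, c x = -1 ∨ c x = 1 := fun x => by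
      simp only [hc]; split_ifs with h <;> [exact Or.inr rfl; exact Or.inl rfl]
    have hcdep : ∀ x y : Fin n → Bool, (∀ i ∈ I.1, x i = y i) → c x = c y := by
      intro x y h
      have : (fun i : {i : Fin n // i ∈ I.1} => x i.1)
          = (fun i : {i : Fin n // i ∈ I.1} => y i.1) := funext fun i => h i.1 i.2
      simp only [hc, this]
    have hrest : ∀ y : {i : Fin n // i ∈ I.1} → Bool,
        (fun i : {i : Fin n // i ∈ I.1} => extAssign I.1 y i.1) = y := by
      intro y; funext i; simp [extAssign, i.2]
    have hsign : ∀ y : {i : Fin n // i ∈ I.1} → Bool,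
        c (extAssign I.1 y) * (marg G I.1 y - marg R I.1 y) = |marg G I.1 y - marg R I.1 y| := by
      intro y
      simp only [hc, hrest y]
      split_ifs with h
      · rw [one_mul, abs_of_nonneg h]
      · rw [abs_of_neg (not_le.mp h)]; ring
    have heq : (∑ x, c x * G x) - ∑ x, c x * R x
        = ∑ y : {i : Fin n // i ∈ I.1} → Bool, |marg G I.1 y - marg R I.1 y| := by
      rw [key I.1 c G hcdep, key I.1 c R hcdep, ← Finset.sum_sub_distrib]
      refine Finset.sum_congr rfl fun y _ => ?_
      rw [← hsign y]; ring
    have hmem : (∀ x, c x = -1 ∨ c x = 1) ∧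
        ∃ J : Finset (Fin n), J.card ≤ ℓ ∧
          ∀ x y : Fin n → Bool, (∀ i ∈ J, x i = y i) → c x = c y :=
      ⟨hc1, I.1, le_of_eq I.2, hcdep⟩
    have h2 : 2 * ((1 / 2) * ∑ y : {i : Fin n // i ∈ I.1} → Bool,
          |marg G I.1 y - marg R I.1 y|)
        = |(∑ x, c x * G x) - ∑ x, c x * R x| := by
      rw [heq, abs_of_nonneg (Finset.sum_nonneg fun y _ => abs_nonneg _)]
      ring
    rw [h2]
    exact le_ciSup hbdd1 (⟨c, hmem⟩ : CT)
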